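/- For α > 0 and integers n ≥ 0, 0 ≤ l ≤ m with m + l ≤ 2^n, the midpoint defect satisfies 2^{(n-1)α}·[f_α(m/2^n) − (1/2)(f_α((m−l)/2^n) + f_α((m+l)/2^n))] = S_{α−1}(m+l) + S_{α−1}(m−l) − 2 S_{α−1}(m). -/

import Mathlib

/-- The tent map `φ(x) = 2 inf{|x-n| : n ∈ ℤ}`. -/
noncomputable def tent (x : ℝ) : ℝ := 2 * ⨅ n : ℤ, |x - (n:ℝ)|

/-- `f_α(x) = ∑_{j=0}^∞ 2^{-αj} φ(2^j x)`. -/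
noncomputable def takagi (α x : ℝ) : ℝ :=
  ∑' j : ℕ, (1 / (2:ℝ) ^ (α * (j:ℝ))) * tent ((2:ℝ) ^ (j:ℕ) * x)


/-- Weighted binary digit sum: `s_p(n) = ∑_j 2^{pj} ε_j(n)`. -/
noncomputable def sWeight (p : ℝ) (n : ℕ) : ℝ :=
  ∑ j ∈ Finset.range n, if n.testBit j then (2:ℝ) ^ (p * (j:ℝ)) else 0

/-- `S_p(n) = ∑_{m=0}^{n-1} s_p(m)`. -/
noncomputable def SWeight (p : ℝ) (n : ℕ) : ℝ :=
  ∑ m ∈ Finset.range n, sWeight p m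

open Finset

/-! At a dyadic point `m / 2ⁿ` only the first `n` terms of the Takagi series survive, and after
rescaling by `2^((n-1)α)` they read `G(m) = ∑_{k<n} 2^(αk) φ(m / 2^(k+1))`. On `[m, m+1]` the
function `x ↦ φ(x / 2^(k+1))` is affine with slope `±2⁻ᵏ`, the sign being `-` exactly when bit `k`
of `m` is set. Hence `G(m+1) - G(m) = c - 2 s_{α-1}(m)` with `c` independent of `m`, so
`G(m) = c m - 2 S_{α-1}(m)`, and the linear part cancels in the second difference. -/

lemma tent_eq_of_forall_abs_sub_le {x : ℝ} (z : ℤ) (hz : ∀ n : ℤ, |x - z| ≤ |x - n|) :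
    tent x = 2 * |x - z| := by
  have hbdd : BddBelow (Set.range fun n : ℤ => |x - n|) :=
    ⟨0, by rintro _ ⟨n, rfl⟩; exact abs_nonneg _⟩
  rw [tent, le_antisymm (ciInf_le hbdd z) (le_ciInf hz)]

lemma tent_eq_two_mul_abs_sub_round (x : ℝ) : tent x = 2 * |x - round x| :=
  tent_eq_of_forall_abs_sub_le _ (round_le x)

lemma tent_add_intCast (x : ℝ) (k : ℤ) : tent (x + k) = tent x := by
  simp only [tent_eq_two_mul_abs_sub_round, round_add_intCast, Int.cast_add,
    add_sub_add_right_eq_sub]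

lemma tent_intCast (k : ℤ) : tent k = 0 := by
  simp [tent_eq_two_mul_abs_sub_round]

lemma tent_of_nonneg_of_le_half {x : ℝ} (h0 : 0 ≤ x) (h1 : x ≤ 1 / 2) : tent x = 2 * x := by
  have hz : ∀ n : ℤ, |x - ((0 : ℤ) : ℝ)| ≤ |x - n| := fun n => by
    rw [Int.cast_zero, sub_zero, abs_of_nonneg h0]
    rcases le_or_gt n 0 with hn | hn
    · have : (n : ℝ) ≤ 0 := by exact_mod_cast hn
      exact le_abs.mpr (Or.inl (by linarith))
    · have : (1 : ℝ) ≤ n := by exact_mod_cast hn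
      exact le_abs.mpr (Or.inr (by linarith))
  rw [tent_eq_of_forall_abs_sub_le 0 hz, Int.cast_zero, sub_zero, abs_of_nonneg h0]

lemma tent_of_half_le_of_le_one {x : ℝ} (h0 : 1 / 2 ≤ x) (h1 : x ≤ 1) :
    tent x = 2 * (1 - x) := by
  have hz : ∀ n : ℤ, |x - ((1 : ℤ) : ℝ)| ≤ |x - n| := fun n => by
    rw [Int.cast_one, abs_of_nonpos (by linarith)]
    rcases le_or_gt n 0 with hn | hn
    · have : (n : ℝ) ≤ 0 := by exact_mod_cast hn
      exact le_abs.mpr (Or.inl (by linarith))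
    · have : (1 : ℝ) ≤ n := by exact_mod_cast hn
      exact le_abs.mpr (Or.inr (by linarith))
  rw [tent_eq_of_forall_abs_sub_le 1 hz, Int.cast_one, abs_of_nonpos (by linarith)]
  ring

lemma tent_add_sub_of_le_half {x h : ℝ} (hx : 0 ≤ x) (hh : 0 ≤ h) (hxh : x + h ≤ 1 / 2) :
    tent (x + h) - tent x = 2 * h := by
  rw [tent_of_nonneg_of_le_half (by linarith) hxh, tent_of_nonneg_of_le_half hx (by linarith)]
  ring

lemma tent_add_sub_of_half_le {x h : ℝ} (hx : 1 / 2 ≤ x) (hh : 0 ≤ h) (hxh : x + h ≤ 1) :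
    tent (x + h) - tent x = -(2 * h) := by
  rw [tent_of_half_le_of_le_one (by linarith) hxh, tent_of_half_le_of_le_one hx (by linarith)]
  ring

lemma tent_natCast_succ_div_sub (m k : ℕ) :
    tent (((m : ℝ) + 1) / 2 ^ (k + 1)) - tent ((m : ℝ) / 2 ^ (k + 1))
      = (if m.testBit k then -2 else 2) / 2 ^ (k + 1) := by
  obtain ⟨q, r, hr, rfl⟩ : ∃ q r, r < 2 ^ (k + 1) ∧ m = 2 ^ (k + 1) * q + r :=
    ⟨m / 2 ^ (k + 1), m % 2 ^ (k + 1), Nat.mod_lt _ (by positivity), (Nat.div_add_mod m _).symm⟩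
  have hbit : (2 ^ (k + 1) * q + r).testBit k = r.testBit k := by
    rw [pow_succ, mul_assoc, Nat.testBit_mul_two_pow_add_eq]
    simp
  have hK : (0 : ℝ) < 2 ^ (k + 1) := by positivity
  have hsplit (t : ℝ) : ((2 ^ (k + 1) * q + r : ℕ) + t) / 2 ^ (k + 1)
      = (r / 2 ^ (k + 1) + t / 2 ^ (k + 1)) + (q : ℤ) := by
    push_cast
    field_simp
    ring
  rw [hsplit 1, ← add_zero ((2 ^ (k + 1) * q + r : ℕ) : ℝ), hsplit 0, tent_add_intCast,
    tent_add_intCast, zero_div, add_zero, hbit]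
  have hr' : (r : ℝ) + 1 ≤ 2 ^ (k + 1) := by exact_mod_cast hr
  rcases lt_or_ge r (2 ^ k) with hlow | hhigh
  · have hr'' : (r : ℝ) + 1 ≤ 2 ^ k := by exact_mod_cast hlow
    rw [Nat.testBit_lt_two_pow hlow, tent_add_sub_of_le_half (by positivity) (by positivity)]
    · simp only [Bool.false_eq_true, if_false]
      ring
    · rw [← add_div, div_le_iff₀ hK, pow_succ]
      linarith
  · obtain ⟨r', rfl⟩ := Nat.exists_eq_add_of_le hhigh
    have hr'' : (2 : ℝ) ^ k ≤ ((2 ^ k + r' : ℕ) : ℝ) := by exact_mod_cast hhigh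
    rw [Nat.testBit_two_pow_add_eq, Nat.testBit_lt_two_pow (by rw [pow_succ] at hr; omega),
      tent_add_sub_of_half_le _ (by positivity)]
    · simp only [Bool.not_false, if_true]
      ring
    · rw [← add_div, div_le_iff₀ hK]
      linarith
    · rw [le_div_iff₀ hK, pow_succ]
      linarith

lemma sWeight_eq_sum_range_of_lt_two_pow (p : ℝ) {m n : ℕ} (h : m < 2 ^ n) :
    sWeight p m = ∑ j ∈ range n, if m.testBit j then (2 : ℝ) ^ (p * j) else 0 := by
  have htrunc {a : ℕ} (ha : m < 2 ^ a) : ∀ b, a ≤ b →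
      ∑ j ∈ range b, (if m.testBit j then (2 : ℝ) ^ (p * j) else 0)
        = ∑ j ∈ range a, if m.testBit j then (2 : ℝ) ^ (p * j) else 0 := fun b hab => by
    refine (sum_subset (range_subset_range.mpr hab) fun j _ hj => ?_).symm
    rw [Nat.testBit_lt_two_pow (ha.trans_le (Nat.pow_le_pow_right two_pos (by simpa using hj))),
      if_neg Bool.false_ne_true]
  have hmin : m < 2 ^ min m n := by
    rcases min_choice m n with hmin | hmin <;> rw [hmin]
    exacts [Nat.lt_two_pow_self, h]
  rw [sWeight, htrunc hmin m (min_le_left m n), htrunc hmin n (min_le_right m n)]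

lemma takagi_natCast_div_two_pow (α : ℝ) (m n : ℕ) :
    takagi α (m / 2 ^ n) = ∑ j ∈ range n, 1 / (2 : ℝ) ^ (α * j) * tent (2 ^ j * (m / 2 ^ n)) := by
  refine tsum_eq_sum fun j hj => ?_
  obtain ⟨d, rfl⟩ := Nat.exists_eq_add_of_le (not_lt.mp (mem_range.not.mp hj))
  have hint : (2 : ℝ) ^ (n + d) * (m / 2 ^ n) = ((2 ^ d * m : ℕ) : ℤ) := by
    push_cast
    field_simp
    ring
  rw [hint, tent_intCast, mul_zero]

lemma two_rpow_mul_takagi_natCast_div_two_pow (α : ℝ) (m n : ℕ) :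
    (2 : ℝ) ^ (((n : ℝ) - 1) * α) * takagi α (m / 2 ^ n)
      = ∑ k ∈ range n, (2 : ℝ) ^ (α * k) * tent (m / 2 ^ (k + 1)) := by
  rw [takagi_natCast_div_two_pow, mul_sum, ← sum_range_reflect]
  refine sum_congr rfl fun j hj => ?_
  obtain ⟨k, rfl⟩ := Nat.exists_eq_add_of_lt (mem_range.mp hj)
  have hk : j + k + 1 - 1 - j = k := by omega
  have hexp : (2 : ℝ) ^ ((((j + k + 1 : ℕ) : ℝ) - 1) * α) / 2 ^ (α * k) = 2 ^ (α * j) := by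
    rw [← Real.rpow_sub two_pos]
    push_cast
    ring_nf
  have harg : (2 : ℝ) ^ k * (m / 2 ^ (j + k + 1)) = m / 2 ^ (j + 1) := by
    rw [add_right_comm, pow_add]
    field_simp
  rw [hk, ← mul_assoc, one_div, ← div_eq_mul_inv, hexp, harg]

lemma sum_tent_natCast_succ_sub (α : ℝ) {m n : ℕ} (h : m < 2 ^ n) :
    ∑ k ∈ range n, (2 : ℝ) ^ (α * k) * tent ((m + 1) / 2 ^ (k + 1))
        - ∑ k ∈ range n, (2 : ℝ) ^ (α * k) * tent (m / 2 ^ (k + 1))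
      = ∑ k ∈ range n, (2 : ℝ) ^ ((α - 1) * k) - 2 * sWeight (α - 1) m := by
  rw [sWeight_eq_sum_range_of_lt_two_pow _ h, mul_sum, ← sum_sub_distrib, ← sum_sub_distrib]
  refine sum_congr rfl fun k _ => ?_
  have hscale : (2 : ℝ) ^ (α * k) * (2 / 2 ^ (k + 1)) = 2 ^ ((α - 1) * k) := by
    rw [pow_succ, ← mul_div_assoc, mul_div_mul_right _ _ two_ne_zero, ← Real.rpow_natCast,
      ← Real.rpow_sub two_pos]
    ring_nf
  rw [← mul_sub, tent_natCast_succ_div_sub]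
  split_ifs
  · rw [neg_div, mul_neg, hscale]
    ring
  · rw [hscale]
    ring

lemma SWeight_succ (p : ℝ) (m : ℕ) : SWeight p (m + 1) = SWeight p m + sWeight p m :=
  sum_range_succ _ _

lemma two_rpow_mul_takagi_natCast_div_two_pow_eq (α : ℝ) {m n : ℕ} (h : m ≤ 2 ^ n) :
    (2 : ℝ) ^ (((n : ℝ) - 1) * α) * takagi α (m / 2 ^ n)
      = m * ∑ k ∈ range n, (2 : ℝ) ^ ((α - 1) * k) - 2 * SWeight (α - 1) m := by
  rw [two_rpow_mul_takagi_natCast_div_two_pow]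
  induction m with
  | zero => simp [SWeight, by simpa using tent_intCast 0]
  | succ m ih =>
    have hstep := sum_tent_natCast_succ_sub α (Nat.lt_of_succ_le h)
    rw [SWeight_succ, Nat.cast_succ]
    linarith [ih (Nat.le_of_succ_le h)]

theorem takagi_defect_eq_SWeight_general (α : ℝ) (n m l : ℕ)
    (hlm : l ≤ m) (hmn : m + l ≤ 2 ^ n) :
    (2:ℝ) ^ (((n:ℝ) - 1) * α) *
        (takagi α ((m:ℝ) / 2 ^ n)
          - (1 / 2) * (takagi α (((m:ℝ) - (l:ℝ)) / 2 ^ n) + takagi α (((m:ℝ) + (l:ℝ)) / 2 ^ n)))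
      = SWeight (α - 1) (m + l) + SWeight (α - 1) (m - l) - 2 * SWeight (α - 1) m := by
  have hmid := two_rpow_mul_takagi_natCast_div_two_pow_eq α (n := n) (m := m) (by omega)
  have hleft := two_rpow_mul_takagi_natCast_div_two_pow_eq α (n := n) (m := m - l) (by omega)
  have hright := two_rpow_mul_takagi_natCast_div_two_pow_eq α hmn
  rw [Nat.cast_sub hlm] at hleft
  rw [Nat.cast_add] at hright
  linear_combination hmid - (1 / 2) * hleft - (1 / 2) * hright

theorem takagi_defect_eq_SWeight (α : ℝ) (hα : 0 < α) (n m l : ℕ)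
    (hlm : l ≤ m) (hmn : m + l ≤ 2 ^ n) :
    (2:ℝ) ^ (((n:ℝ) - 1) * α) *
        (takagi α ((m:ℝ) / 2 ^ n)
          - (1 / 2) * (takagi α (((m:ℝ) - (l:ℝ)) / 2 ^ n) + takagi α (((m:ℝ) + (l:ℝ)) / 2 ^ n)))
      = SWeight (α - 1) (m + l) + SWeight (α - 1) (m - l) - 2 * SWeight (α - 1) m :=
  takagi_defect_eq_SWeight_general α n m l hlm hmn
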